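/- Let A be the 3-dimensional complex algebra with basis e1,e2,e3 and products e1e1 = e2, e1e2 = e3, e2e1 = λe3 (λ ∈ ℂ fixed). Then the bilinear form θ = (λ−2)Δ13 − (2λ−1)Δ31 is a CD-cocycle: θ ∈ Z²_CD(A, ℂ), where Δij(e_l,e_m) = δ_il δ_jm. -/
import Mathlib


/-- The three degree-4 identities defining a CD-algebra. -/
def IsCD {A : Type*} [AddCommGroup A] (m : A → A → A) : Prop :=
  (∀ a b x y : A,
      m (m (m x y) a) b - m (m (m x y) b) a =
        m (m (m x a) b - m (m x b) a) y + m x (m (m y a) b - m (m y b) a)) ∧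
  (∀ a b x y : A,
      m (m a (m x y)) b - m a (m (m x y) b) =
        m (m (m a x) b - m a (m x b)) y + m x (m (m a y) b - m a (m y b))) ∧
  (∀ a b x y : A,
      m a (m b (m x y)) - m b (m a (m x y)) =
        m (m a (m b x) - m b (m a x)) y + m x (m a (m b y) - m b (m a y)))

/-- The CD-cocycle conditions for a map `θ : A × A → V`. -/
def IsCDCocycle {A V : Type*} [AddCommGroup A] [AddCommGroup V]
    (m : A → A → A) (θ : A → A → V) : Prop :=
  (∀ a b x y : A,
      θ (m (m x y) a) b - θ (m (m x y) b) a =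
        θ (m (m x a) b - m (m x b) a) y + θ x (m (m y a) b - m (m y b) a)) ∧
  (∀ a b x y : A,
      θ (m a (m x y)) b - θ a (m (m x y) b) =
        θ (m (m a x) b - m a (m x b)) y + θ x (m (m a y) b - m a (m y b))) ∧
  (∀ a b x y : A,
      θ a (m b (m x y)) - θ b (m a (m x y)) =
        θ (m a (m b x) - m b (m a x)) y + θ x (m a (m b y) - m b (m a y)))

/-- Evaluation of a nonassociative word in `A` under the multiplication `m`. -/
def magEval {A : Type*} (m : A → A → A) : FreeMagma A → A
  | FreeMagma.of a => a
  | FreeMagma.mul x y => m (magEval m x) (magEval m y)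

/-- The number of letters of a nonassociative word. -/
def magLen {A : Type*} : FreeMagma A → ℕ
  | FreeMagma.of _ => 1
  | FreeMagma.mul x y => magLen x + magLen y

/-- An algebra is nilpotent iff all sufficiently long products vanish. -/
def IsNilpotentMul {A : Type*} [AddCommGroup A] (m : A → A → A) : Prop :=
  ∃ n : ℕ, ∀ w : FreeMagma A, n ≤ magLen w → magEval m w = 0

/-- Basis vectors of ℂ³. -/
noncomputable def e3 (i : Fin 3) : Fin 3 → ℂ := Pi.single i 1

/-- The family of algebras A(λ): e1e1 = e2, e1e2 = e3, e2e1 = λe3. -/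
noncomputable def mulCD304 (l : ℂ) (u v : Fin 3 → ℂ) : Fin 3 → ℂ :=
  Pi.single (1 : Fin 3) (u 0 * v 0) + Pi.single (2 : Fin 3) (u 0 * v 1 + l * (u 1 * v 0))

lemma mulCD304_0 (l : ℂ) (u v : Fin 3 → ℂ) : mulCD304 l u v 0 = 0 := by
  simp [mulCD304, Pi.single_apply]

lemma mulCD304_1 (l : ℂ) (u v : Fin 3 → ℂ) : mulCD304 l u v 1 = u 0 * v 0 := by
  simp [mulCD304, Pi.single_apply]

lemma mulCD304_2 (l : ℂ) (u v : Fin 3 → ℂ) :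
    mulCD304 l u v 2 = u 0 * v 1 + l * (u 1 * v 0) := by
  simp [mulCD304, Pi.single_apply]

/-- The bilinear form (λ-2)Δ13 - (2λ-1)Δ31 is a CD-cocycle on A(λ). -/
theorem cocycle_of_CD304 (l : ℂ) :
    IsCDCocycle (mulCD304 l)
      (fun u v => (l - 2) * (u 0 * v 2) - (2 * l - 1) * (u 2 * v 0)) := by
  refine ⟨?_, ?_, ?_⟩ <;> intro a b x y <;>
    simp only [Pi.sub_apply, mulCD304_0, mulCD304_1, mulCD304_2] <;> ring
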